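/- Let X be a real Banach space and let x₀* ∈ S_{X*} be a w*-Δ-point. Then for every x₀ ∈ S_X and α > 0 with x₀* ∈ S(x₀, α) there exist a sequence (x_i*)_{i≥1} in S(x₀, α) and a sequence (x_i)_{i≥1} in S_X such that x₀*(x_i) > 1 − 1/i for every i ∈ ℕ, and, writing x_0 := x₀ and x_0* := x₀*, one has ‖x_i* − x_j*‖ ≥ 2 − α and ‖x_i − x_j‖ ≥ 2 − α for all i, j ∈ ℕ ∪ {0} with i ≠ j. -/

import Mathlib

open Metric Set Filter NNReal

noncomputable section

/-- The topological dual of a seminormed space (Mathlib's former `NormedSpace.Dual`). -/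
abbrev NormedSpace.Dual (𝕜 : Type*) [NontriviallyNormedField 𝕜] (E : Type*) [SeminormedAddCommGroup E]
    [NormedSpace 𝕜 E] : Type _ :=
  E →L[𝕜] 𝕜

namespace DeltaPaper

/-! ### Generic Banach space notions -/

variable {X : Type*} [NormedAddCommGroup X] [NormedSpace ℝ X]

/-- `x` is a Daugavet-point: every slice of the unit ball contains, for every `ε > 0`,
an element at distance at least `2 - ε` from `x`. -/
def IsDaugavetPoint (x : X) : Prop :=
  ∀ (φ : NormedSpace.Dual ℝ X) (α : ℝ), ‖φ‖ = 1 → 0 < α → ∀ ε > 0,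
    ∃ y : X, ‖y‖ ≤ 1 ∧ 1 - α < φ y ∧ 2 - ε ≤ ‖x - y‖

/-- `x` is a Δ-point: every slice of the unit ball containing `x` contains, for every
`ε > 0`, an element at distance at least `2 - ε` from `x`. -/
def IsDeltaPoint (x : X) : Prop :=
  ∀ (φ : NormedSpace.Dual ℝ X) (α : ℝ), ‖φ‖ = 1 → 0 < α → 1 - α < φ x → ∀ ε > 0,
    ∃ y : X, ‖y‖ ≤ 1 ∧ 1 - α < φ y ∧ 2 - ε ≤ ‖x - y‖

/-- `x*` is a w*-Daugavet-point of the dual of `X`. -/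
def IsWeakStarDaugavetPoint (f : NormedSpace.Dual ℝ X) : Prop :=
  ∀ (x : X) (α : ℝ), ‖x‖ = 1 → 0 < α → ∀ ε > 0,
    ∃ g : NormedSpace.Dual ℝ X, ‖g‖ ≤ 1 ∧ 1 - α < g x ∧ 2 - ε ≤ ‖f - g‖

/-- `x*` is a w*-Δ-point of the dual of `X`. -/
def IsWeakStarDeltaPoint (f : NormedSpace.Dual ℝ X) : Prop :=
  ∀ (x : X) (α : ℝ), ‖x‖ = 1 → 0 < α → 1 - α < f x → ∀ ε > 0,
    ∃ g : NormedSpace.Dual ℝ X, ‖g‖ ≤ 1 ∧ 1 - α < g x ∧ 2 - ε ≤ ‖f - g‖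

/-- `x` is a denting point of the unit ball: it lies in slices of the unit ball of
arbitrarily small diameter. -/
def IsDentingPoint (x : X) : Prop :=
  ‖x‖ ≤ 1 ∧ ∀ ε > 0, ∃ (φ : NormedSpace.Dual ℝ X) (α : ℝ), ‖φ‖ = 1 ∧ 0 < α ∧
    1 - α < φ x ∧ Metric.diam {y : X | ‖y‖ ≤ 1 ∧ 1 - α < φ y} < ε

/-- The Kuratowski measure of non-compactness of a set: the infimum of all `ε > 0`
such that the set can be covered by finitely many sets of diameter less than `ε`. -/
def kuratowski {Y : Type*} [PseudoMetricSpace Y] (A : Set Y) : ℝ :=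
  sInf {ε : ℝ | 0 < ε ∧ ∃ 𝒞 : Finset (Set Y), (A ⊆ ⋃ B ∈ 𝒞, B) ∧ ∀ B ∈ 𝒞, Metric.diam B < ε}

/-! ### The space of Lipschitz functions vanishing at a base point -/

variable {M : Type*} [PseudoMetricSpace M]

/-- The least Lipschitz constant of a function. -/
def lipConst (f : M → ℝ) : ℝ≥0 := sInf {K | LipschitzWith K f}

theorem lipschitzWith_lipConst {f : M → ℝ} (hf : ∃ K, LipschitzWith K f) :
    LipschitzWith (lipConst f) f := by
  obtain ⟨K₀, hK₀⟩ := hf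
  rw [lipschitzWith_iff_dist_le_mul]
  intro x y
  rcases le_or_gt (dist x y) 0 with h | h
  · have h0 : dist x y = 0 := le_antisymm h dist_nonneg
    have := hK₀.dist_le_mul x y
    rw [h0, mul_zero] at this ⊢
    exact this
  · rw [← div_le_iff₀ h]
    have hnn : 0 ≤ dist (f x) (f y) / dist x y := by positivity
    rw [← Real.coe_toNNReal _ hnn, NNReal.coe_le_coe]
    refine le_csInf ⟨K₀, hK₀⟩ ?_
    intro K hK
    rw [← NNReal.coe_le_coe, Real.coe_toNNReal _ hnn, div_le_iff₀ h]
    exact hK.dist_le_mul x y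

theorem lipConst_le {f : M → ℝ} {K : ℝ≥0} (hK : LipschitzWith K f) : lipConst f ≤ K :=
  csInf_le (OrderBot.bddBelow _) hK

theorem lipschitzWith_smul {f : M → ℝ} {K : ℝ≥0} (hK : LipschitzWith K f) (c : ℝ) :
    LipschitzWith (‖c‖₊ * K) (c • f) := by
  rw [lipschitzWith_iff_dist_le_mul] at *
  intro x y
  have : dist ((c • f) x) ((c • f) y) = ‖c‖ * dist (f x) (f y) := by
    simp only [Pi.smul_apply, smul_eq_mul, Real.dist_eq, ← mul_sub, abs_mul, Real.norm_eq_abs]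
  rw [this, NNReal.coe_mul, coe_nnnorm, mul_assoc]
  exact mul_le_mul_of_nonneg_left (hK x y) (norm_nonneg c)

variable (M) in
/-- The submodule of `M → ℝ` consisting of Lipschitz functions vanishing at the
base point `z`. -/
def Lip0 (z : M) : Submodule ℝ (M → ℝ) where
  carrier := {f | (∃ K, LipschitzWith K f) ∧ f z = 0}
  add_mem' := by
    rintro f g ⟨⟨K, hK⟩, hf0⟩ ⟨⟨L, hL⟩, hg0⟩
    exact ⟨⟨K + L, hK.add hL⟩, by simp [hf0, hg0]⟩
  zero_mem' := ⟨⟨0, LipschitzWith.const' 0⟩, rfl⟩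
  smul_mem' := by
    rintro c f ⟨⟨K, hK⟩, hf0⟩
    exact ⟨⟨‖c‖₊ * K, lipschitzWith_smul hK c⟩, by simp [hf0]⟩

variable {z : M}

instance : NormedAddCommGroup ↥(Lip0 M z) :=
  AddGroupNorm.toNormedAddCommGroup
    { toFun := fun f => ((lipConst (f : M → ℝ) : ℝ≥0) : ℝ)
      map_zero' := by
        have h0 : lipConst (0 : M → ℝ) = 0 :=
          le_antisymm (lipConst_le (by simpa using LipschitzWith.const' (0 : ℝ))) bot_le
        show ((lipConst ((0 : ↥(Lip0 M z)) : M → ℝ) : ℝ≥0) : ℝ) = 0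
        rw [show ((0 : ↥(Lip0 M z)) : M → ℝ) = 0 from rfl, h0, NNReal.coe_zero]
      add_le' := by
        intro f g
        have hf := lipschitzWith_lipConst f.2.1
        have hg := lipschitzWith_lipConst g.2.1
        have : lipConst ((f + g : ↥(Lip0 M z)) : M → ℝ) ≤
            lipConst (f : M → ℝ) + lipConst (g : M → ℝ) := by
          refine lipConst_le ?_
          have := hf.add hg
          convert this using 1 <;> rfl
        exact_mod_cast this
      neg' := by
        intro f
        show ((lipConst ((-f : ↥(Lip0 M z)) : M → ℝ) : ℝ≥0) : ℝ) = _
        rw [show ((-f : ↥(Lip0 M z)) : M → ℝ) = -(f : M → ℝ) from rfl]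
        unfold lipConst
        congr 2
        ext K
        exact ⟨fun hK => by simpa using hK.neg, fun hK => hK.neg⟩
      eq_zero_of_map_eq_zero' := by
        intro f hf
        replace hf : ((lipConst (f : M → ℝ) : ℝ≥0) : ℝ) = 0 := hf
        have h0 : lipConst (f : M → ℝ) = 0 := by exact_mod_cast hf
        have hl : LipschitzWith 0 (f : M → ℝ) := h0 ▸ lipschitzWith_lipConst f.2.1
        ext x
        have := hl.dist_le_mul x z
        simp only [NNReal.coe_zero, zero_mul] at this
        have hxz : (f : M → ℝ) x = (f : M → ℝ) z :=
          dist_le_zero.mp this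
        simpa [f.2.2] using hxz }

theorem Lip0.norm_def (f : ↥(Lip0 M z)) : ‖f‖ = ((lipConst (f : M → ℝ) : ℝ≥0) : ℝ) := rfl

theorem Lip0.lipschitzWith (f : ↥(Lip0 M z)) : LipschitzWith (lipConst (f : M → ℝ)) (f : M → ℝ) :=
  lipschitzWith_lipConst f.2.1

instance : NormedSpace ℝ ↥(Lip0 M z) where
  norm_smul_le c f := by
    have : lipConst ((c • f : ↥(Lip0 M z)) : M → ℝ) ≤ ‖c‖₊ * lipConst (f : M → ℝ) :=
      lipConst_le (lipschitzWith_smul (Lip0.lipschitzWith f) c)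
    calc ‖c • f‖ = ((lipConst ((c • f : ↥(Lip0 M z)) : M → ℝ) : ℝ≥0) : ℝ) := rfl
      _ ≤ ((‖c‖₊ * lipConst (f : M → ℝ) : ℝ≥0) : ℝ) := by exact_mod_cast this
      _ = ‖c‖ * ‖f‖ := by push_cast [Lip0.norm_def]; rfl

variable (M z) in
/-- The evaluation functional `δ_x ∈ Lip₀(M)*`. -/
def evalδ (x : M) : NormedSpace.Dual ℝ ↥(Lip0 M z) :=
  LinearMap.mkContinuous
    { toFun := fun f => (f : M → ℝ) x
      map_add' := fun f g => rfl
      map_smul' := fun c f => rfl }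
    (dist x z)
    (by
      intro f
      have := (Lip0.lipschitzWith f).dist_le_mul x z
      simp only [f.2.2, Real.dist_eq, sub_zero] at this
      calc ‖(f : M → ℝ) x‖ = |(f : M → ℝ) x - 0| := by simp
        _ ≤ (lipConst (f : M → ℝ) : ℝ) * dist x z := by
            simpa [f.2.2, Real.dist_eq] using (Lip0.lipschitzWith f).dist_le_mul x z
        _ = dist x z * ‖f‖ := by rw [Lip0.norm_def, mul_comm])

variable (M z) in
/-- The Lipschitz-free space over `M`: the closed linear span of the evaluation
functionals inside `Lip₀(M)*`. -/
def FreeSpace : Submodule ℝ (NormedSpace.Dual ℝ ↥(Lip0 M z)) :=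
  (Submodule.span ℝ (Set.range (evalδ M z))).topologicalClosure

variable (M z) in
/-- The molecule `m_{x y} = (δ_x - δ_y)/d(x,y)` as an element of `Lip₀(M)*`. -/
def molecule (x y : M) : NormedSpace.Dual ℝ ↥(Lip0 M z) :=
  (dist x y)⁻¹ • (evalδ M z x - evalδ M z y)

theorem molecule_mem_freeSpace (x y : M) : molecule M z x y ∈ FreeSpace M z :=
  Submodule.le_topologicalClosure _
    (Submodule.smul_mem _ _ (Submodule.sub_mem _
      (Submodule.subset_span ⟨x, rfl⟩) (Submodule.subset_span ⟨y, rfl⟩)))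

variable (M z) in
/-- The molecule `m_{x y}` as an element of the free space `F(M)`. -/
def mol (x y : M) : ↥(FreeSpace M z) := ⟨molecule M z x y, molecule_mem_freeSpace x y⟩

variable (M) in
/-- A metric space is uniformly discrete if distances between distinct points are
bounded below by a positive constant. -/
def UniformlyDiscrete : Prop := ∃ θ > (0:ℝ), ∀ x y : M, x ≠ y → θ ≤ dist x y

/-- A norm-one Lipschitz function is local if its Lipschitz constant is approximated
on pairs of arbitrarily close points. -/
def IsLocal (f : ↥(Lip0 M z)) : Prop :=
  ∀ ε > 0, ∃ u v : M, u ≠ v ∧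
    ‖f‖ - ε < ((f : M → ℝ) u - (f : M → ℝ) v) / dist u v ∧ dist u v < ε

/-- `f ∈ S_{Lip₀(M)}` is a w*-Daugavet-point: for every w*-slice `S(μ, α)` of
`B_{Lip₀(M)}` (`μ` a norm-one element of `F(M)`) and every `ε > 0` there is `g` in the
slice with `‖f - g‖ ≥ 2 - ε`. -/
def IsLipWeakStarDaugavetPoint (f : ↥(Lip0 M z)) : Prop :=
  ∀ μ : NormedSpace.Dual ℝ ↥(Lip0 M z), μ ∈ FreeSpace M z → ‖μ‖ = 1 → ∀ α > (0:ℝ), ∀ ε > (0:ℝ),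
    ∃ g : ↥(Lip0 M z), ‖g‖ ≤ 1 ∧ 1 - α < μ g ∧ 2 - ε ≤ ‖f - g‖

/-- `f ∈ S_{Lip₀(M)}` is a w*-Δ-point: the same as above, but only for w*-slices
containing `f`. -/
def IsLipWeakStarDeltaPoint (f : ↥(Lip0 M z)) : Prop :=
  ∀ μ : NormedSpace.Dual ℝ ↥(Lip0 M z), μ ∈ FreeSpace M z → ‖μ‖ = 1 → ∀ α > (0:ℝ),
    1 - α < μ f → ∀ ε > (0:ℝ),
    ∃ g : ↥(Lip0 M z), ‖g‖ ≤ 1 ∧ 1 - α < μ g ∧ 2 - ε ≤ ‖f - g‖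

end DeltaPaper

open DeltaPaper NormedSpace

/-!
Each pair `(x_k*, x_k)` comes from the w*-Δ property applied to the w*-slice determined by
`z = x₀/4 + x_1 + ⋯ + x_{k-1}`, with a tiny tolerance: it gives `x_k*` in that slice with
`‖x₀* - x_k*‖ ≈ 2`, hence a unit vector `x_k` with `x₀*(x_k) ≈ 1 ≈ -x_k*(x_k)`. As `‖x_k*‖ ≤ 1` and
the `x_l` are almost normed by `x₀*`, lying in the slice of `z` forces `x_k*` to be almost as large
as `x₀*` on every summand of `z`: `x_k*(x₀) > 1 - α` and `x_k*(x_l) > 1 - α/2` for `l < k`.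
Evaluating `x_k* - x_l*` at `x_l` and `x_k*` at `x_l - x_k` then gives the separations, once the
tolerances are summable and small compared with the margin `x₀*(x₀) - (1 - α)`.
-/

namespace DeltaPaper

open Finset

theorem exists_seq_pos_le_inv_sum_le {η : ℝ} (hη : 0 < η) :
    ∃ e : ℕ → ℝ, (∀ k, 0 < e k) ∧ (∀ k, e k ≤ 1 / (k + 1)) ∧ ∀ k, ∑ l ∈ range k, e l ≤ η := by
  refine ⟨fun k => min (1 / (k + 1)) (η / 2 * (1 / 2) ^ k), fun k => by positivity,
    fun k => min_le_left _ _, fun k => ?_⟩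
  calc ∑ l ∈ range k, min (1 / ((l : ℝ) + 1)) (η / 2 * (1 / 2) ^ l)
      ≤ ∑ l ∈ range k, η / 2 * (1 / 2 : ℝ) ^ l := sum_le_sum fun l _ => min_le_right _ _
    _ = η / 2 * ∑ l ∈ range k, (1 / 2 : ℝ) ^ l := (mul_sum _ _ _).symm
    _ ≤ η / 2 * 2 := by gcongr; exact sum_geometric_two_le k
    _ = η := by ring

theorem forall_ne_le_norm_sub_of_lt {E : Type*} [SeminormedAddCommGroup E] {c : ℝ} {f : ℕ → E}
    (h : ∀ j k, j < k → c ≤ ‖f j - f k‖) : ∀ j k, j ≠ k → c ≤ ‖f j - f k‖ := by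
  intro j k hjk
  rcases hjk.lt_or_gt with hlt | hlt
  · exact h j k hlt
  · rw [norm_sub_rev]
    exact h k j hlt

section Dual

variable {X : Type*} [NormedAddCommGroup X] [NormedSpace ℝ X]

theorem apply_le_opNorm_mul_norm (ψ : Dual ℝ X) (y : X) : ψ y ≤ ‖ψ‖ * ‖y‖ :=
  (le_abs_self _).trans (ψ.le_opNorm y)

theorem abs_apply_le_norm {ψ : Dual ℝ X} (hψ : ‖ψ‖ ≤ 1) (y : X) : |ψ y| ≤ ‖y‖ := by
  simpa using ψ.le_of_opNorm_le hψ y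

theorem apply_le_norm {ψ : Dual ℝ X} (hψ : ‖ψ‖ ≤ 1) (y : X) : ψ y ≤ ‖y‖ :=
  (le_abs_self _).trans (abs_apply_le_norm hψ y)

theorem neg_norm_le_apply {ψ : Dual ℝ X} (hψ : ‖ψ‖ ≤ 1) (y : X) : -‖y‖ ≤ ψ y :=
  neg_le_of_abs_le (abs_apply_le_norm hψ y)

theorem exists_norm_eq_one_lt_apply (ψ : Dual ℝ X) {c : ℝ} (hc : 0 ≤ c) (hcψ : c < ‖ψ‖) :
    ∃ y : X, ‖y‖ = 1 ∧ c < ψ y := by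
  obtain ⟨u, hu1, hcu⟩ := ψ.exists_lt_apply_of_lt_opNorm hcψ
  obtain ⟨v, hv1, hcv⟩ : ∃ v : X, ‖v‖ ≤ 1 ∧ c < ψ v := by
    rcases le_or_gt 0 (ψ u) with h | h
    · exact ⟨u, hu1.le, by rwa [Real.norm_of_nonneg h] at hcu⟩
    · exact ⟨-u, by simpa using hu1.le, by rwa [Real.norm_of_nonpos h.le, ← map_neg] at hcu⟩
  have hv0 : 0 < ‖v‖ := norm_pos_iff.mpr (by rintro rfl; simp at hcv; linarith)
  -- `ψ v > 0` and `‖v‖ ≤ 1`, so normalizing `v` can only increase `ψ v`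
  refine ⟨‖v‖⁻¹ • v, by simp [norm_smul, hv0.ne'], ?_⟩
  rw [map_smul, smul_eq_mul, inv_mul_eq_div, lt_div_iff₀ hv0]
  nlinarith

theorem lt_apply_of_add_eq {φ g : Dual ℝ X} (hg : ‖g‖ ≤ 1) {v w z : X} (hvw : v + w = z)
    {δ : ℝ} (h : φ z - δ < g z) : φ v - δ - (‖w‖ - φ w) < g v := by
  rw [← hvw, map_add, map_add] at h
  linarith [apply_le_norm hg w]

theorem norm_sum_sub_apply_sum_le {ι : Type*} (φ : Dual ℝ X) (s : Finset ι) (v : ι → X) :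
    ‖∑ i ∈ s, v i‖ - φ (∑ i ∈ s, v i) ≤ ∑ i ∈ s, (‖v i‖ - φ (v i)) := by
  rw [map_sum, sum_sub_distrib]
  linarith [norm_sum_le s v]

namespace IsWeakStarDeltaPoint

variable {φ₀ : Dual ℝ X}

theorem exists_lt_apply_le_norm_sub (hΔ : IsWeakStarDeltaPoint φ₀) (hφ₀ : ‖φ₀‖ = 1) (z : X)
    {δ ε : ℝ} (hδ : 0 < δ) (hε : 0 < ε) :
    ∃ g : Dual ℝ X, ‖g‖ ≤ 1 ∧ φ₀ z - δ < g z ∧ 2 - ε ≤ ‖φ₀ - g‖ := by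
  rcases eq_or_ne z 0 with rfl | hz
  · refine ⟨-φ₀, by rw [norm_neg, hφ₀], by simpa using hδ, ?_⟩
    rw [sub_neg_eq_add, ← two_smul ℝ, norm_smul, hφ₀]
    norm_num
    linarith
  have hz0 : 0 < ‖z‖ := norm_pos_iff.mpr hz
  have hφ₀z : φ₀ z ≤ ‖z‖ := by simpa [hφ₀] using apply_le_opNorm_mul_norm φ₀ z
  -- the w*-slice `S(z / ‖z‖, α)` with this `α` is `{g ∈ B_{X*} | φ₀ z - δ < g z}`
  obtain ⟨g, hg, hgz, hfar⟩ := hΔ (‖z‖⁻¹ • z) (1 - (φ₀ z - δ) / ‖z‖)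
    (by simp [norm_smul, hz0.ne']) (by rw [sub_pos, div_lt_one hz0]; linarith)
    (by rw [map_smul, smul_eq_mul, inv_mul_eq_div, sub_sub_cancel]; gcongr; linarith) ε hε
  refine ⟨g, hg, ?_, hfar⟩
  rwa [map_smul, smul_eq_mul, inv_mul_eq_div, sub_sub_cancel, div_lt_div_iff_of_pos_right hz0]
    at hgz

theorem exists_mem_slice_apply_lt_neg (hΔ : IsWeakStarDeltaPoint φ₀) (hφ₀ : ‖φ₀‖ = 1) (z : X)
    {ε : ℝ} (hε : 0 < ε) (hε2 : ε ≤ 2) :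
    ∃ (g : Dual ℝ X) (y : X), ‖g‖ ≤ 1 ∧ φ₀ z - ε < g z ∧
      ‖y‖ = 1 ∧ 1 - ε < φ₀ y ∧ g y < -(1 - ε) := by
  obtain ⟨g, hg, hgz, hfar⟩ := hΔ.exists_lt_apply_le_norm_sub hφ₀ z hε (half_pos hε)
  obtain ⟨y, hy, hφ₀gy⟩ := exists_norm_eq_one_lt_apply (φ₀ - g) (c := 2 - ε) (by linarith)
    (by linarith)
  have hφ₀y := apply_le_norm hφ₀.le y
  have hgy := neg_norm_le_apply hg y
  rw [sub_apply] at hφ₀gy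
  rw [hy] at hφ₀y hgy
  exact ⟨g, y, hg, hgz, hy, by linarith, by linarith⟩

theorem exists_seq (hΔ : IsWeakStarDeltaPoint φ₀) (hφ₀ : ‖φ₀‖ = 1) (w : X) {e : ℕ → ℝ}
    (he : ∀ k, 0 < e k) (he2 : ∀ k, e k ≤ 2) :
    ∃ (g : ℕ → Dual ℝ X) (y : ℕ → X), ∀ k, ‖g k‖ ≤ 1 ∧ ‖y k‖ = 1 ∧
      1 - e k < φ₀ (y k) ∧ g k (y k) < -(1 - e k) ∧
      φ₀ w - ∑ l ∈ range (k + 1), e l < g k w ∧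
      ∀ j < k, 1 - ∑ l ∈ range (k + 1), e l - (‖w‖ - φ₀ w) < g k (y j) := by
  choose G Y hG hGz hY hφ₀Y hGY using
    fun k z => hΔ.exists_mem_slice_apply_lt_neg hφ₀ z (he k) (he2 k)
  -- `g k` lies in the slice at `z k = w + y 0 + ⋯ + y (k - 1)`; as all summands but `w` are almost
  -- normed by `φ₀`, this forces `g k` to be almost as large as `φ₀` on each summand
  let z : ℕ → X := fun k => Nat.rec w (fun k zk => zk + Y k zk) k
  set y : ℕ → X := fun k => Y k (z k)
  have hz : ∀ k, z k = w + ∑ l ∈ range k, y l := by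
    intro k
    induction k with
    | zero => simp [z]
    | succ k ih => rw [sum_range_succ, ← add_assoc, ← ih]
  have hdef : ∀ l, ‖y l‖ - φ₀ (y l) ≤ e l := fun l => by linarith [hY l (z l), hφ₀Y l (z l)]
  refine ⟨fun k => G k (z k), y, fun k => ⟨hG _ _, hY _ _, hφ₀Y _ _, hGY _ _, ?_, ?_⟩⟩
  · have h := lt_apply_of_add_eq (hG k (z k)) (hz k).symm (hGz k (z k))
    have hsum := (norm_sum_sub_apply_sum_le φ₀ (range k) y).trans (sum_le_sum fun l _ => hdef l)
    rw [sum_range_succ]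
    linarith
  · intro j hj
    have hsplit : z k = y j + (w + ∑ l ∈ (range k).erase j, y l) := by
      rw [hz, ← add_sum_erase _ _ (mem_range.2 hj)]
      abel
    have h := lt_apply_of_add_eq (hG k (z k)) hsplit.symm (hGz k (z k))
    have hsum := (norm_sum_sub_apply_sum_le φ₀ ((range k).erase j) y).trans
      (sum_le_sum fun l _ => hdef l)
    have hw := norm_add_le w (∑ l ∈ (range k).erase j, y l)
    rw [map_add] at h
    rw [sum_range_succ, ← add_sum_erase _ _ (mem_range.2 hj)]
    linarith [hφ₀Y j (z j)]

theorem exists_seq_separated (hΔ : IsWeakStarDeltaPoint φ₀) (hφ₀ : ‖φ₀‖ = 1) {x₀ : X}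
    (hx₀ : ‖x₀‖ = 1) {α : ℝ} (hmem : 1 - α < φ₀ x₀) :
    ∃ (g : ℕ → Dual ℝ X) (y : ℕ → X), ∀ k, ‖g k‖ ≤ 1 ∧ 1 - α < g k x₀ ∧
      ‖y k‖ = 1 ∧ 1 - 1 / ((k : ℝ) + 1) < φ₀ (y k) ∧
      2 - α ≤ ‖φ₀ - g k‖ ∧ 2 - α ≤ ‖x₀ - y k‖ ∧
      ∀ j < k, 2 - α ≤ ‖g j - g k‖ ∧ 2 - α ≤ ‖y j - y k‖ := by
  have hφ₀x₀ : φ₀ x₀ ≤ 1 := by simpa [hx₀] using apply_le_norm hφ₀.le x₀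
  obtain ⟨e, he0, he1, hesum⟩ :=
    exists_seq_pos_le_inv_sum_le (η := (φ₀ x₀ - (1 - α)) / 8) (by linarith)
  have he2 (k : ℕ) : e k ≤ 2 :=
    (he1 k).trans <| by rw [div_le_iff₀ (by positivity)]; linarith [k.cast_nonneg (α := ℝ)]
  have hek (k : ℕ) : e k ≤ (φ₀ x₀ - (1 - α)) / 8 :=
    (single_le_sum (fun l _ => (he0 l).le) (self_mem_range_succ k)).trans (hesum (k + 1))
  -- `x₀` enters the sums with weight `1 / 4`, so that its own deficiency `1 - φ₀ x₀` costs little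
  obtain ⟨g, y, h⟩ := hΔ.exists_seq hφ₀ ((4 : ℝ)⁻¹ • x₀) he0 he2
  refine ⟨g, y, fun k => ?_⟩
  obtain ⟨hg, hy, hφ₀y, hgy, hgx₀, hgyj⟩ := h k
  have hS := hesum (k + 1)
  simp only [map_smul, smul_eq_mul, norm_smul, hx₀, norm_inv, Real.norm_ofNat] at hgx₀ hgyj
  refine ⟨hg, by linarith, hy, by linarith [he1 k], ?_, ?_, fun j hj => ⟨?_, ?_⟩⟩
  · calc 2 - α ≤ (φ₀ - g k) (y k) := by rw [sub_apply]; linarith [hek k]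
      _ ≤ ‖φ₀ - g k‖ := by simpa [hy] using apply_le_opNorm_mul_norm (φ₀ - g k) (y k)
  · calc 2 - α ≤ g k (x₀ - y k) := by rw [map_sub]; linarith [hek k]
      _ ≤ ‖x₀ - y k‖ := apply_le_norm hg _
  · obtain ⟨-, hyj, -, hgjyj, -⟩ := h j
    rw [norm_sub_rev]
    calc 2 - α ≤ (g k - g j) (y j) := by rw [sub_apply]; linarith [hgyj j hj, hek j]
      _ ≤ ‖g k - g j‖ := by simpa [hyj] using apply_le_opNorm_mul_norm (g k - g j) (y j)
  · calc 2 - α ≤ g k (y j - y k) := by rw [map_sub]; linarith [hgyj j hj, hek k]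
      _ ≤ ‖y j - y k‖ := apply_le_norm hg _

end IsWeakStarDeltaPoint

end Dual

end DeltaPaper

open DeltaPaper NormedSpace

theorem statement2_general {X : Type*} [NormedAddCommGroup X] [NormedSpace ℝ X]
    (φ₀ : Dual ℝ X) (hφ₀ : ‖φ₀‖ = 1) (hΔ : IsWeakStarDeltaPoint φ₀)
    (x₀ : X) (α : ℝ) (hx₀ : ‖x₀‖ = 1) (hmem : 1 - α < φ₀ x₀) :
    ∃ (φ : ℕ → Dual ℝ X) (x : ℕ → X),
      φ 0 = φ₀ ∧ x 0 = x₀ ∧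
      (∀ i, 1 ≤ i → ‖φ i‖ ≤ 1 ∧ 1 - α < φ i x₀) ∧
      (∀ i, 1 ≤ i → ‖x i‖ = 1 ∧ 1 - 1 / (i : ℝ) < φ₀ (x i)) ∧
      (∀ i j, i ≠ j → 2 - α ≤ ‖φ i - φ j‖) ∧
      (∀ i j, i ≠ j → 2 - α ≤ ‖x i - x j‖) := by
  obtain ⟨g, y, h⟩ := hΔ.exists_seq_separated hφ₀ hx₀ hmem
  choose hg hgx₀ hy hφ₀y hφ₀g hx₀y hgsep hysep using h
  refine ⟨fun | 0 => φ₀ | k + 1 => g k, fun | 0 => x₀ | k + 1 => y k, rfl, rfl, ?_, ?_,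
    forall_ne_le_norm_sub_of_lt ?_, forall_ne_le_norm_sub_of_lt ?_⟩
  · rintro (_ | k) hk
    exacts [absurd hk (by norm_num), ⟨hg k, hgx₀ k⟩]
  · rintro (_ | k) hk
    exacts [absurd hk (by norm_num), ⟨hy k, by exact_mod_cast hφ₀y k⟩]
  · rintro (_ | j) (_ | k) hjk
    exacts [absurd hjk (by omega), hφ₀g k, absurd hjk (by omega), hgsep k j (by omega)]
  · rintro (_ | j) (_ | k) hjk
    exacts [absurd hjk (by omega), hx₀y k, absurd hjk (by omega), hysep k j (by omega)]

/-- Proposition 2.3. If `x₀* ∈ S_{X*}` is a w*-Δ-point, then for every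
w*-slice `S(x₀, α)` of `B_{X*}` containing `x₀*` there are sequences `(x_i*)_{i ≥ 1}` in
`S(x₀, α)` and `(x_i)_{i ≥ 1}` in `S_X` with `x₀*(x_i) > 1 - 1/i`, and, setting `x_0 = x₀`,
`x_0* = x₀*`, one has `‖x_i* - x_j*‖ ≥ 2 - α` and `‖x_i - x_j‖ ≥ 2 - α` for `i ≠ j`. -/
theorem statement2 {X : Type*} [NormedAddCommGroup X] [NormedSpace ℝ X] [CompleteSpace X]
    (φ₀ : Dual ℝ X) (hφ₀ : ‖φ₀‖ = 1) (hΔ : IsWeakStarDeltaPoint φ₀)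
    (x₀ : X) (α : ℝ) (hx₀ : ‖x₀‖ = 1) (hα : 0 < α) (hmem : 1 - α < φ₀ x₀) :
    ∃ (φ : ℕ → Dual ℝ X) (x : ℕ → X),
      φ 0 = φ₀ ∧ x 0 = x₀ ∧
      (∀ i, 1 ≤ i → ‖φ i‖ ≤ 1 ∧ 1 - α < φ i x₀) ∧
      (∀ i, 1 ≤ i → ‖x i‖ = 1 ∧ 1 - 1 / (i : ℝ) < φ₀ (x i)) ∧
      (∀ i j, i ≠ j → 2 - α ≤ ‖φ i - φ j‖) ∧
      (∀ i j, i ≠ j → 2 - α ≤ ‖x i - x j‖) :=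
  statement2_general φ₀ hφ₀ hΔ x₀ α hx₀ hmem
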